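/- arXiv:2212.13040 — 5 statements merged into one kernel-verified Lean document; each statement's English description precedes it below -/
import Mathlib

section
/- A finite poset P is a unit interval order (i.e., isomorphic to ([n], ⪯_S) for some finite set S = {x_1 < ... < x_n} of reals, where i ⪯_S j iff x_i + 1 < x_j) if and only if P is (3+1)-free and (2+2)-free, meaning the induced order on any four elements is neither the disjoint union of a 3-chain and a single incomparable element, nor the disjoint union of two 2-chains. -/
/-- `a` and `b` are incomparable in the strict order `<`. -/
def Incomp {α : Type*} [PartialOrder α] (a b : α) : Prop := ¬ a < b ∧ ¬ b < a

namespace UnitIntervalAux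

variable {α : Type*} [PartialOrder α]

/-- Existence of a maximal element of a finite nonempty set w.r.t. a total transitive
relation. -/
lemma exists_rmax (r : α → α → Prop) (rtot : ∀ a b, r a b ∨ r b a)
    (rtrans : ∀ a b c, r a b → r b c → r a c) :
    ∀ s : Finset α, s.Nonempty → ∃ m ∈ s, ∀ b ∈ s, r b m := by
  classical
  intro s
  induction s using Finset.induction_on with
  | empty => intro h; simp at h
  | @insert a s ha ih =>
    intro _
    rcases Finset.eq_empty_or_nonempty s with rfl | hs
    · refine ⟨a, Finset.mem_insert_self a _, ?_⟩
      intro b hb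
      rcases Finset.mem_insert.mp hb with rfl | hb
      · rcases rtot b b with h | h <;> exact h
      · simp at hb
    · obtain ⟨m, hm, hmb⟩ := ih hs
      rcases rtot a m with h | h
      · refine ⟨m, Finset.mem_insert_of_mem hm, ?_⟩
        intro b hb
        rcases Finset.mem_insert.mp hb with rfl | hb
        · exact h
        · exact hmb b hb
      · refine ⟨a, Finset.mem_insert_self a _, ?_⟩
        intro b hb
        rcases Finset.mem_insert.mp hb with rfl | hb
        · rcases rtot b b with h' | h' <;> exact h'
        · exact rtrans b m a (hmb b hb) h

/-- Key construction: given a linear order `r` compatible with the strict partial order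
(in the sense that `r a b` implies down-sets and up-sets are nested), construct a
unit interval representation on any finite set. -/
lemma rep (r : α → α → Prop) (rtot : ∀ a b, r a b ∨ r b a)
    (ranti : ∀ a b, r a b → r b a → a = b)
    (rtrans : ∀ a b c, r a b → r b c → r a c)
    (rcompat : ∀ a b, r a b → (∀ c, c < a → c < b) ∧ (∀ c, b < c → a < c)) :
    ∀ s : Finset α, ∃ x : α → ℝ,
      (∀ a ∈ s, ∀ b ∈ s, (a < b ↔ x a + 1 < x b)) ∧
      (∀ a ∈ s, ∀ b ∈ s, a ≠ b → r a b → x a < x b) ∧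
      (∀ a ∈ s, ∀ b ∈ s, a ≠ b → ¬ a < b → ¬ b < a → |x a - x b| < 1) := by
  classical
  intro s
  induction s using Finset.strongInduction with
  | _ s ih =>
    rcases Finset.eq_empty_or_nonempty s with rfl | hs
    · exact ⟨fun _ => 0, by simp, by simp, by simp⟩
    obtain ⟨m, hm, hmax⟩ := exists_rmax r rtot rtrans s hs
    obtain ⟨x', H1, H2, H3⟩ := ih (s.erase m) (Finset.erase_ssubset hm)
    set s' := s.erase m with hs'def
    have hmem : ∀ b ∈ s', b ∈ s ∧ b ≠ m := fun b hb =>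
      ⟨Finset.mem_of_mem_erase hb, (Finset.mem_erase.mp hb).1⟩
    have hnotlt : ∀ b ∈ s, ¬ m < b := by
      intro b hb hlt
      exact lt_irrefl m ((rcompat b m (hmax b hb)).1 m hlt)
    have keyβ : ∀ b ∈ s', b < m → ∀ c ∈ s', ¬ c < m → x' b < x' c := by
      intro b hb hbm c hc hcm
      have hbc : b ≠ c := fun h => hcm (h ▸ hbm)
      have hrbc : r b c := by
        rcases rtot b c with h | h
        · exact h
        · exact absurd ((rcompat c b h).2 m hbm) hcm
      exact H2 b hb c hc hbc hrbc
    have keyα : ∀ b ∈ s', ¬ b < m → ∀ c ∈ s', ¬ c < m → x' b < x' c + 1 := by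
      intro b hb hbm c hc hcm
      by_cases hbc : b = c
      · subst hbc; exact lt_add_one _
      · have h1 : ¬ b < c := fun h =>
          hbm ((rcompat c m (hmax c (hmem c hc).1)).1 b h)
        have h2 : ¬ c < b := fun h =>
          hcm ((rcompat b m (hmax b (hmem b hb).1)).1 c h)
        have := H3 b hb c hc hbc h1 h2
        rw [abs_sub_lt_iff] at this
        linarith only [this.1]
    -- find the value for the new maximal element
    have hT : ∃ t : ℝ, (∀ b ∈ s', b < m → x' b + 1 < t) ∧
        (∀ b ∈ s', ¬ b < m → x' b < t ∧ t < x' b + 1) := by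
      by_cases hI : ∃ b ∈ s', ¬ b < m
      · set Ds := s'.filter (fun b => b < m) with hDs
        set Is := s'.filter (fun b => ¬ b < m) with hIs
        have hIne : Is.Nonempty := by
          obtain ⟨b, hb, hbm⟩ := hI
          exact ⟨b, Finset.mem_filter.mpr ⟨hb, hbm⟩⟩
        set loset := Ds.image (fun b => x' b + 1) ∪ Is.image x' with hloset
        set hiset := Is.image (fun b => x' b + 1) with hhiset
        have hlone : loset.Nonempty := by
          obtain ⟨b, hb⟩ := hIne
          exact ⟨x' b, Finset.mem_union_right _ (Finset.mem_image_of_mem _ hb)⟩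
        have hhine : hiset.Nonempty := hIne.image _
        set lo := loset.max' hlone with hlodef
        set hi := hiset.min' hhine with hhidef
        have hlolt : lo < hi := by
          rw [hlodef, Finset.max'_lt_iff]
          intro u hu
          rw [hhidef, Finset.lt_min'_iff]
          intro v hv
          obtain ⟨c, hc, rfl⟩ := Finset.mem_image.mp hv
          obtain ⟨hc1, hc2⟩ := Finset.mem_filter.mp hc
          rcases Finset.mem_union.mp hu with hu | hu
          · obtain ⟨b, hb, rfl⟩ := Finset.mem_image.mp hu
            obtain ⟨hb1, hb2⟩ := Finset.mem_filter.mp hb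
            have := keyβ b hb1 hb2 c hc1 hc2
            linarith only [this]
          · obtain ⟨b, hb, rfl⟩ := Finset.mem_image.mp hu
            obtain ⟨hb1, hb2⟩ := Finset.mem_filter.mp hb
            exact keyα b hb1 hb2 c hc1 hc2
        refine ⟨(lo + hi) / 2, ?_, ?_⟩
        · intro b hb hbm
          have hmem1 : x' b + 1 ∈ loset :=
            Finset.mem_union_left _
              (Finset.mem_image_of_mem _ (Finset.mem_filter.mpr ⟨hb, hbm⟩))
          have hle : x' b + 1 ≤ lo := Finset.le_max' loset _ hmem1
          linarith only [hle, hlolt]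
        · intro b hb hbm
          have hmem1 : x' b ∈ loset :=
            Finset.mem_union_right _
              (Finset.mem_image_of_mem _ (Finset.mem_filter.mpr ⟨hb, hbm⟩))
          have h1 : x' b ≤ lo := Finset.le_max' loset _ hmem1
          have h2 : hi ≤ x' b + 1 := Finset.min'_le hiset (x' b + 1)
            (Finset.mem_image_of_mem _ (Finset.mem_filter.mpr ⟨hb, hbm⟩))
          constructor <;> linarith only [h1, h2, hlolt]
      · push_neg at hI
        by_cases hD : s'.Nonempty
        · refine ⟨(s'.image (fun b => x' b + 1)).max' (hD.image _) + 1, ?_, ?_⟩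
          · intro b hb _
            have hle : x' b + 1 ≤ (s'.image (fun b => x' b + 1)).max' (hD.image _) :=
              Finset.le_max' _ _ (Finset.mem_image_of_mem (fun b => x' b + 1) hb)
            linarith only [hle]
          · intro b hb hbm
            exact absurd (hI b hb) hbm
        · exact ⟨0, fun b hb => (hD ⟨b, hb⟩).elim, fun b hb => (hD ⟨b, hb⟩).elim⟩
    obtain ⟨t, hT1, hT2⟩ := hT
    have hupd : ∀ b ∈ s', Function.update x' m t b = x' b := fun b hb =>
      Function.update_of_ne (hmem b hb).2 t x'
    have hupm : Function.update x' m t m = t := Function.update_self m t x'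
    have hsplit : ∀ a ∈ s, a = m ∨ a ∈ s' := by
      intro a ha
      by_cases h : a = m
      · exact Or.inl h
      · exact Or.inr (Finset.mem_erase.mpr ⟨h, ha⟩)
    refine ⟨Function.update x' m t, ?_, ?_, ?_⟩
    · -- representation iff
      intro a ha b hb
      rcases hsplit a ha with hA | ha' <;> rcases hsplit b hb with hB | hb'
      · rw [hA, hB, hupm]
        constructor
        · intro hlt; exact absurd hlt (lt_irrefl _)
        · intro hlt; linarith only [hlt]
      · rw [hA, hupm, hupd b hb']
        constructor
        · intro hlt; exact absurd hlt (hnotlt b (hmem b hb').1)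
        · intro hlt
          exfalso
          by_cases hbm : b < m
          · have h' := hT1 b hb' hbm; linarith only [h', hlt]
          · have h' := (hT2 b hb' hbm).1; linarith only [h', hlt]
      · rw [hB, hupm, hupd a ha']
        constructor
        · intro hlt; exact hT1 a ha' hlt
        · intro hlt
          by_contra hn
          have h' := (hT2 a ha' hn).2; linarith only [h', hlt]
      · rw [hupd a ha', hupd b hb']
        exact H1 a ha' b hb'
    · -- strict monotonicity w.r.t. r
      intro a ha b hb hne hr
      rcases hsplit a ha with hA | ha' <;> rcases hsplit b hb with hB | hb'
      · exact absurd (hA.trans hB.symm) hne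
      · rw [hA] at hr
        rw [hA] at hne
        exact absurd (ranti _ _ hr (hmax b (hmem b hb').1)) hne
      · rw [hB, hupm, hupd a ha']
        rw [hB] at hne
        by_cases ham : a < m
        · have h' := hT1 a ha' ham; linarith only [h']
        · exact (hT2 a ha' ham).1
      · rw [hupd a ha', hupd b hb']
        exact H2 a ha' b hb' hne hr
    · -- slack for incomparable pairs
      intro a ha b hb hne h1 h2
      rcases hsplit a ha with hA | ha' <;> rcases hsplit b hb with hB | hb'
      · exact absurd (hA.trans hB.symm) hne
      · rw [hA] at h2
        rw [hA, hupm, hupd b hb']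
        have h' := hT2 b hb' h2
        rw [abs_sub_lt_iff]
        constructor <;> linarith only [h'.1, h'.2]
      · rw [hB] at h1
        rw [hB, hupm, hupd a ha']
        have h' := hT2 a ha' h1
        rw [abs_sub_lt_iff]
        constructor <;> linarith only [h'.1, h'.2]
      · rw [hupd a ha', hupd b hb']
        exact H3 a ha' b hb' hne h1 h2

/-- Totality of the canonical weak order, from (3+1)- and (2+2)-freeness. -/
lemma sq_total
    (h31 : ¬ ∃ a b c d : α, a ≠ b ∧ a ≠ c ∧ a ≠ d ∧ b ≠ c ∧ b ≠ d ∧ c ≠ d ∧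
        a < b ∧ b < c ∧ Incomp a d ∧ Incomp b d ∧ Incomp c d)
    (h22 : ¬ ∃ a b c d : α, a ≠ b ∧ a ≠ c ∧ a ≠ d ∧ b ≠ c ∧ b ≠ d ∧ c ≠ d ∧
        a < b ∧ c < d ∧ Incomp a c ∧ Incomp a d ∧ Incomp b c ∧ Incomp b d)
    (a b : α) :
    ((∀ e, e < a → e < b) ∧ (∀ e, b < e → a < e)) ∨
      ((∀ e, e < b → e < a) ∧ (∀ e, a < e → b < e)) := by
  by_contra hcon
  have hA : ¬ (∀ e, e < a → e < b) ∨ ¬ (∀ e, b < e → a < e) := by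
    by_contra h
    push_neg at h
    exact hcon (Or.inl ⟨h.1, h.2⟩)
  have hB : ¬ (∀ e, e < b → e < a) ∨ ¬ (∀ e, a < e → b < e) := by
    by_contra h
    push_neg at h
    exact hcon (Or.inr ⟨h.1, h.2⟩)
  rcases hA with hA | hA <;> rcases hB with hB | hB <;> push_neg at hA hB
  · -- c < a, ¬ c < b ; d < b, ¬ d < a : a (2+2)
    obtain ⟨c, hca, hcb⟩ := hA
    obtain ⟨d, hdb, hda⟩ := hB
    exact h22 ⟨c, a, d, b,
      ne_of_lt hca,
      fun h => hcb (h ▸ hdb),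
      fun h => hda (lt_trans hdb (h ▸ hca)),
      fun h => hcb (lt_trans hca (h ▸ hdb)),
      fun h => hcb (h ▸ hca),
      ne_of_lt hdb,
      hca, hdb,
      ⟨fun h => hcb (lt_trans h hdb), fun h => hda (lt_trans h hca)⟩,
      ⟨hcb, fun h => hda (lt_trans hdb (lt_trans h hca))⟩,
      ⟨fun h => hcb (lt_trans hca (lt_trans h hdb)), hda⟩,
      ⟨fun h => hcb (lt_trans hca h), fun h => hda (lt_trans hdb h)⟩⟩
  · -- c < a, ¬ c < b ; a < d, ¬ b < d : a (3+1) with chain c < a < d and extra b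
    obtain ⟨c, hca, hcb⟩ := hA
    obtain ⟨d, had, hbd⟩ := hB
    exact h31 ⟨c, a, d, b,
      ne_of_lt hca,
      ne_of_lt (lt_trans hca had),
      fun h => hbd (lt_trans (h ▸ hca) had),
      ne_of_lt had,
      fun h => hcb (h ▸ hca),
      fun h => hcb (lt_trans hca (h ▸ had)),
      hca, had,
      ⟨hcb, fun h => hbd (lt_trans (lt_trans h hca) had)⟩,
      ⟨fun h => hcb (lt_trans hca h), fun h => hbd (lt_trans h had)⟩,
      ⟨fun h => hcb (lt_trans (lt_trans hca had) h), hbd⟩⟩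
  · -- b < c, ¬ a < c ; d < b, ¬ d < a : a (3+1) with chain d < b < c and extra a
    obtain ⟨c, hbc, hac⟩ := hA
    obtain ⟨d, hdb, hda⟩ := hB
    exact h31 ⟨d, b, c, a,
      ne_of_lt hdb,
      ne_of_lt (lt_trans hdb hbc),
      fun h => hac (lt_trans (h ▸ hdb) hbc),
      ne_of_lt hbc,
      fun h => hac (h ▸ hbc),
      fun h => hda (lt_trans hdb (h ▸ hbc)),
      hdb, hbc,
      ⟨hda, fun h => hac (lt_trans (lt_trans h hdb) hbc)⟩,
      ⟨fun h => hda (lt_trans hdb h), fun h => hac (lt_trans h hbc)⟩,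
      ⟨fun h => hda (lt_trans (lt_trans hdb hbc) h), hac⟩⟩
  · -- b < c, ¬ a < c ; a < d, ¬ b < d : a (2+2)
    obtain ⟨c, hbc, hac⟩ := hA
    obtain ⟨d, had, hbd⟩ := hB
    exact h22 ⟨b, c, a, d,
      ne_of_lt hbc,
      fun h => hbd (h ▸ had),
      fun h => hac (lt_trans (h ▸ had) hbc),
      fun h => hbd (lt_trans hbc (h ▸ had)),
      fun h => hbd (h ▸ hbc),
      ne_of_lt had,
      hbc, had,
      ⟨fun h => hbd (lt_trans h had), fun h => hac (lt_trans h hbc)⟩,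
      ⟨hbd, fun h => hac (lt_trans had (lt_trans h hbc))⟩,
      ⟨fun h => hbd (lt_trans hbc (lt_trans h had)), hac⟩,
      ⟨fun h => hbd (lt_trans hbc h), fun h => hac (lt_trans had h)⟩⟩

end UnitIntervalAux

/-- **A finite poset is a unit interval order iff it is (3+1)-free and (2+2)-free.**
A unit interval order is one isomorphic to `([n], ⪯_S)` where `i ⪯_S j ↔ x_i + 1 < x_j`
for a finite set `S` of reals; this is encoded by an injective `x : α → ℝ` with
`a < b ↔ x a + 1 < x b`. -/
theorem unit_interval_iff_three_plus_one_and_two_plus_two_free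
    {α : Type*} [Fintype α] [PartialOrder α] :
    (∃ x : α → ℝ, Function.Injective x ∧ ∀ a b : α, a < b ↔ x a + 1 < x b) ↔
      ((¬ ∃ a b c d : α, a ≠ b ∧ a ≠ c ∧ a ≠ d ∧ b ≠ c ∧ b ≠ d ∧ c ≠ d ∧
          a < b ∧ b < c ∧ Incomp a d ∧ Incomp b d ∧ Incomp c d) ∧
       (¬ ∃ a b c d : α, a ≠ b ∧ a ≠ c ∧ a ≠ d ∧ b ≠ c ∧ b ≠ d ∧ c ≠ d ∧
          a < b ∧ c < d ∧ Incomp a c ∧ Incomp a d ∧ Incomp b c ∧ Incomp b d)) := by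
  classical
  constructor
  · rintro ⟨x, -, hx⟩
    constructor
    · rintro ⟨a, b, c, d, -, -, -, -, -, -, hab, hbc, had, hbd, hcd⟩
      have h1 : x a + 1 < x b := (hx a b).mp hab
      have h2 : x b + 1 < x c := (hx b c).mp hbc
      have h3 : ¬ x d + 1 < x c := fun h => hcd.2 ((hx d c).mpr h)
      have h4 : ¬ x a + 1 < x d := fun h => had.1 ((hx a d).mpr h)
      push_neg at h3 h4
      linarith only [h1, h2, h3, h4]
    · rintro ⟨a, b, c, d, -, -, -, -, -, -, hab, hcd, hac, had, hbc, hbd⟩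
      have h1 : x a + 1 < x b := (hx a b).mp hab
      have h2 : x c + 1 < x d := (hx c d).mp hcd
      have h3 : ¬ x a + 1 < x d := fun h => had.1 ((hx a d).mpr h)
      have h4 : ¬ x c + 1 < x b := fun h => hbc.2 ((hx c b).mpr h)
      push_neg at h3 h4
      linarith only [h1, h2, h3, h4]
  · rintro ⟨h31, h22⟩
    -- the canonical weak order
    set sq : α → α → Prop :=
      fun a b => (∀ e, e < a → e < b) ∧ (∀ e, b < e → a < e) with hsq
    have sqtot : ∀ a b, sq a b ∨ sq b a := UnitIntervalAux.sq_total h31 h22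
    have sqtrans : ∀ a b c, sq a b → sq b c → sq a c := by
      rintro a b c ⟨h1, h2⟩ ⟨h3, h4⟩
      exact ⟨fun e he => h3 e (h1 e he), fun e he => h2 e (h4 e he)⟩
    -- break ties with an injection into ℕ to get a linear order
    set k : α → ℕ := fun a => ((Fintype.equivFin α) a : ℕ) with hk
    have kinj : Function.Injective k := fun a b h =>
      (Fintype.equivFin α).injective (Fin.val_injective h)
    set r : α → α → Prop := fun a b => sq a b ∧ (sq b a → k a ≤ k b) with hr
    have rtot : ∀ a b, r a b ∨ r b a := by
      intro a b
      rcases sqtot a b with h | h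
      · by_cases h' : sq b a
        · rcases le_total (k a) (k b) with hk' | hk'
          · exact Or.inl ⟨h, fun _ => hk'⟩
          · exact Or.inr ⟨h', fun _ => hk'⟩
        · exact Or.inl ⟨h, fun hh => absurd hh h'⟩
      · by_cases h' : sq a b
        · rcases le_total (k a) (k b) with hk' | hk'
          · exact Or.inl ⟨h', fun _ => hk'⟩
          · exact Or.inr ⟨h, fun _ => hk'⟩
        · exact Or.inr ⟨h, fun hh => absurd hh h'⟩
    have ranti : ∀ a b, r a b → r b a → a = b := by
      rintro a b ⟨h1, h2⟩ ⟨h3, h4⟩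
      exact kinj (le_antisymm (h2 h3) (h4 h1))
    have rtrans : ∀ a b c, r a b → r b c → r a c := by
      rintro a b c ⟨h1, h2⟩ ⟨h3, h4⟩
      refine ⟨sqtrans a b c h1 h3, fun hca => ?_⟩
      have hba : sq b a := sqtrans b c a h3 hca
      have hcb : sq c b := sqtrans c a b hca h1
      exact le_trans (h2 hba) (h4 hcb)
    have rcompat : ∀ a b, r a b → (∀ c, c < a → c < b) ∧ (∀ c, b < c → a < c) :=
      fun a b h => h.1
    obtain ⟨x, hx1, hx2, hx3⟩ :=
      UnitIntervalAux.rep r rtot ranti rtrans rcompat Finset.univ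
    refine ⟨x, ?_, ?_⟩
    · intro a b hab
      by_contra hne
      rcases rtot a b with h | h
      · have := hx2 a (Finset.mem_univ a) b (Finset.mem_univ b) hne h
        rw [hab] at this
        exact lt_irrefl _ this
      · have := hx2 b (Finset.mem_univ b) a (Finset.mem_univ a) (Ne.symm hne) h
        rw [hab] at this
        exact lt_irrefl _ this
    · intro a b
      exact hx1 a (Finset.mem_univ a) b (Finset.mem_univ b)
end

section
/- The number of unit interval posets with n elements (counted up to isomorphism) equals the n-th Catalan number Cat_n = (1/(2n+1)) * C(2n+1, n). -/
/-- `r` is (the strict order of) a unit interval order on `Fin n`: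
`r i j ↔ x i + 1 < x j` for some reals `x 1 < ⋯ < x n`. -/
def IsUnitIntervalRel (n : ℕ) (r : Fin n → Fin n → Prop) : Prop :=
  ∃ x : Fin n → ℝ, StrictMono x ∧ ∀ i j, r i j ↔ x i + 1 < x j

/-- Isomorphism of relations on `Fin n` (relabeling by a permutation). -/
def IsoRel (n : ℕ) (r r' : {r : Fin n → Fin n → Prop // IsUnitIntervalRel n r}) : Prop :=
  ∃ σ : Equiv.Perm (Fin n), ∀ i j, r.1 i j ↔ r'.1 (σ i) (σ j)

/-! A unit interval order `r` on points `x 0 < ⋯ < x (n-1)` is determined by its threshold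
function `t i = #{j | ¬ r i j}`, which is the least `j` with `x i + 1 < x j` (or `n`). It is
monotone with `i < t i ≤ n`, and every such sequence arises: the points can be placed one at a
time, each new point to the right of all previous ones and inside the window that the sequence
prescribes. Relabelling by a permutation permutes the values of `t`, and a monotone sequence is
determined by its multiset of values, so the isomorphism classes correspond exactly to these
sequences. Splitting a sequence at the first `i` with `t i = i + 1` (the first return of the
corresponding Dyck path) gives the Catalan recursion `C (n+1) = ∑ C k * C (n-k)`. -/

open Finset

theorem two_mul_add_one_mul_catalan (n : ℕ) :
    (2 * n + 1) * catalan n = (2 * n + 1).choose n := by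
  refine Nat.eq_of_mul_eq_mul_left n.succ_pos ?_
  calc (n + 1) * ((2 * n + 1) * catalan n) = (2 * n + 1) * (2 * n).choose n := by
        rw [mul_left_comm, succ_mul_catalan_eq_centralBinom, Nat.centralBinom]
    _ = (2 * n + 1).choose (n + 1) * (n + 1) := Nat.add_one_mul_choose_eq _ _
    _ = (n + 1) * (2 * n + 1).choose n := by rw [Nat.choose_symm_half, mul_comm]

theorem Monotone.eq_of_comp_perm {α : Type*} [LinearOrder α] {n : ℕ} {f g : Fin n → α}
    (hf : Monotone f) (hg : Monotone g) (σ : Equiv.Perm (Fin n)) (h : g ∘ σ = f) : f = g :=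
  List.ofFn_injective <|
    (h ▸ σ.ofFn_comp_perm g).eq_of_sortedLE hf.sortedLE_ofFn hg.sortedLE_ofFn

theorem Fin.mem_iff_lt_card_of_isLowerSet {n : ℕ} {s : Finset (Fin n)}
    (hs : IsLowerSet (s : Set (Fin n))) (j : Fin n) : j ∈ s ↔ (j : ℕ) < #s := by
  constructor
  · intro hj
    have : Iic j ⊆ s := fun i hi => mem_coe.1 (hs (mem_Iic.1 hi) (mem_coe.2 hj))
    have := card_le_card this
    rw [Fin.card_Iic] at this
    omega
  · intro hlt
    by_contra hj
    have : s ⊆ Iio j := fun i hi =>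
      mem_Iio.2 (lt_of_not_ge fun hji => hj (mem_coe.1 (hs hji (mem_coe.2 hi))))
    have := card_le_card this
    rw [Fin.card_Iio] at this
    omega

theorem Fin.strictMono_snoc {α : Type*} [Preorder α] {n : ℕ} {x : Fin n → α}
    (hx : StrictMono x) {v : α} (hv : ∀ i, x i < v) :
    StrictMono (Fin.snoc x v : Fin (n + 1) → α) := by
  intro a b hab
  induction b using Fin.lastCases with
  | last =>
    induction a using Fin.lastCases with
    | last => exact absurd hab (lt_irrefl _)
    | cast a => simpa using hv a
  | cast b =>
    induction a using Fin.lastCases with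
    | last => exact absurd hab (Fin.castSucc_lt_last b).not_gt
    | cast a => simpa using hx (Fin.castSucc_lt_castSucc_iff.1 hab)

@[ext]
structure CatalanSeq (n : ℕ) where
  toFun : Fin n → ℕ
  monotone : Monotone toFun
  lt_apply : ∀ i : Fin n, (i : ℕ) < toFun i
  apply_le : ∀ i : Fin n, toFun i ≤ n

namespace CatalanSeq

variable {n : ℕ}

instance : CoeFun (CatalanSeq n) (fun _ => Fin n → ℕ) := ⟨toFun⟩

instance : Finite (CatalanSeq n) :=
  Finite.of_injective (fun f i => (⟨f i, Nat.lt_succ_of_le (f.apply_le i)⟩ : Fin (n + 1)))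
    fun _ _ h => CatalanSeq.ext (funext fun i => congrArg Fin.val (congrFun h i))

instance : Unique (CatalanSeq 0) where
  default := ⟨Fin.elim0, fun i => i.elim0, fun i => i.elim0, fun i => i.elim0⟩
  uniq _ := CatalanSeq.ext (funext fun i => i.elim0)

theorem apply_last (f : CatalanSeq (n + 1)) : f (Fin.last n) = n + 1 :=
  le_antisymm (f.apply_le _) (by simpa using f.lt_apply (Fin.last n))

def firstTouch (f : CatalanSeq (n + 1)) : Fin (n + 1) :=
  (univ.filter fun i : Fin (n + 1) => f i = i + 1).min' ⟨Fin.last n, by simp [apply_last]⟩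

theorem apply_firstTouch (f : CatalanSeq (n + 1)) : f f.firstTouch = f.firstTouch + 1 := by
  unfold firstTouch
  exact (mem_filter.1 (min'_mem (univ.filter fun i : Fin (n + 1) => f i = i + 1) _)).2

theorem firstTouch_le {f : CatalanSeq (n + 1)} {i : Fin (n + 1)} (h : f i = i + 1) :
    f.firstTouch ≤ i :=
  min'_le _ i (mem_filter.2 ⟨mem_univ i, h⟩)

theorem add_two_le_apply_of_lt_firstTouch {f : CatalanSeq (n + 1)} {i : Fin (n + 1)}
    (hi : i < f.firstTouch) : i + 2 ≤ f i := by
  have := f.lt_apply i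
  have : f i ≠ i + 1 := fun h => (firstTouch_le h).not_gt hi
  omega

def insidePart (f : CatalanSeq (n + 1)) : CatalanSeq f.firstTouch where
  toFun (j : Fin f.firstTouch) := f (Fin.castLE f.firstTouch.is_lt.le j) - 1
  monotone _ _ hab := Nat.sub_le_sub_right (f.monotone ((Fin.castLE_le_castLE_iff _).2 hab)) 1
  lt_apply j := by
    have := add_two_le_apply_of_lt_firstTouch
      (f := f) (i := Fin.castLE f.firstTouch.is_lt.le j) j.is_lt
    simp only [Fin.val_castLE] at this
    omega
  apply_le j := by
    have := f.monotone (show Fin.castLE f.firstTouch.is_lt.le j ≤ f.firstTouch from j.is_lt.le)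
    have := f.apply_firstTouch
    omega

def outsidePart (f : CatalanSeq (n + 1)) : CatalanSeq (n - f.firstTouch) where
  toFun (j : Fin (n - f.firstTouch)) := f ⟨f.firstTouch + 1 + j, by omega⟩ - (f.firstTouch + 1)
  monotone a b hab :=
    Nat.sub_le_sub_right (f.monotone (Fin.mk_le_mk.2 (by have : (a : ℕ) ≤ b := hab; omega))) _
  lt_apply j := by
    have := f.lt_apply ⟨f.firstTouch + 1 + j, by omega⟩
    simp only at this
    omega
  apply_le j := by
    have := f.apply_le ⟨f.firstTouch + 1 + j, by omega⟩
    omega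

def join (k : Fin (n + 1)) (g : CatalanSeq k) (h : CatalanSeq (n - k)) : CatalanSeq (n + 1) where
  toFun (i : Fin (n + 1)) :=
    if hi : (i : ℕ) < k then g ⟨i, hi⟩ + 1
    else if hk : (i : ℕ) = k then k + 1
    else h ⟨i - (k + 1), by omega⟩ + (k + 1)
  monotone a b hab := by
    have hab : (a : ℕ) ≤ b := hab
    dsimp only
    split_ifs <;> try omega
    · exact Nat.add_le_add_right (g.monotone (Fin.mk_le_mk.2 hab)) 1
    · exact Nat.add_le_add_right (g.apply_le _) 1
    · exact le_add_left (Nat.add_le_add_right (g.apply_le _) 1)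
    · exact Nat.add_le_add_right (h.monotone (Fin.mk_le_mk.2 (by omega))) _
  lt_apply i := by
    split_ifs with hi hk
    · have := g.lt_apply ⟨i, hi⟩
      simp only at this
      omega
    · omega
    · have := h.lt_apply ⟨i - (k + 1), by omega⟩
      simp only at this
      omega
  apply_le i := by
    split_ifs with hi hk
    · have := g.apply_le ⟨i, hi⟩
      omega
    · omega
    · have := h.apply_le ⟨i - (k + 1), by omega⟩
      omega

section join

variable {k : Fin (n + 1)} {g : CatalanSeq k} {h : CatalanSeq (n - k)} {i : Fin (n + 1)}

theorem join_apply_of_lt (hi : (i : ℕ) < k) : join k g h i = g ⟨i, hi⟩ + 1 := dif_pos hi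

theorem join_apply_self : join k g h k = k + 1 := by
  simp [join]

theorem join_apply_of_gt (hi : (k : ℕ) < i) :
    join k g h i = h ⟨i - (k + 1), by omega⟩ + (k + 1) := by
  simp only [join]
  rw [dif_neg hi.not_gt, dif_neg hi.ne']

theorem firstTouch_join : (join k g h).firstTouch = k := by
  refine le_antisymm (firstTouch_le join_apply_self) (not_lt.1 fun hlt => ?_)
  have h₁ := (join k g h).apply_firstTouch
  have h₂ := g.lt_apply ⟨_, hlt⟩
  rw [join_apply_of_lt hlt] at h₁
  simp only at h₂
  omega

end join

theorem join_injective :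
    Function.Injective fun s : Σ k : Fin (n + 1), CatalanSeq k × CatalanSeq (n - k) =>
      join s.1 s.2.1 s.2.2 := by
  rintro ⟨k, g, h⟩ ⟨k', g', h'⟩ he
  obtain rfl : k = k' := by simpa only [firstTouch_join] using congrArg firstTouch he
  have he (i : Fin (n + 1)) : join k g h i = join k g' h' i := congrFun (congrArg toFun he) i
  obtain rfl : g = g' := CatalanSeq.ext <| funext fun j => by
    have := he ⟨j, by omega⟩
    rwa [join_apply_of_lt j.is_lt, join_apply_of_lt j.is_lt, Nat.add_right_cancel_iff] at this
  obtain rfl : h = h' := CatalanSeq.ext <| funext fun j => by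
    have := he ⟨k + 1 + j, by omega⟩
    rw [join_apply_of_gt (by simp only; omega), join_apply_of_gt (by simp only; omega),
      Nat.add_right_cancel_iff] at this
    simpa using this
  rfl

theorem join_insidePart_outsidePart (f : CatalanSeq (n + 1)) :
    join f.firstTouch f.insidePart f.outsidePart = f := by
  ext i
  rcases lt_trichotomy (i : ℕ) f.firstTouch with hi | hi | hi
  · rw [join_apply_of_lt hi]
    have := f.lt_apply i
    simp only [insidePart, Fin.castLE_mk, Fin.eta]
    omega
  · obtain rfl : i = f.firstTouch := Fin.ext hi
    rw [join_apply_self, apply_firstTouch]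
  · rw [join_apply_of_gt hi]
    have := f.lt_apply i
    simp only [outsidePart, Nat.add_sub_cancel' (Nat.succ_le_of_lt hi), Fin.eta]
    omega

theorem card_succ : Nat.card (CatalanSeq (n + 1)) =
    ∑ k : Fin (n + 1), Nat.card (CatalanSeq k) * Nat.card (CatalanSeq (n - k)) := by
  rw [← Nat.card_eq_of_bijective _ ⟨join_injective, fun f =>
    ⟨⟨_, _, _⟩, join_insidePart_outsidePart f⟩⟩, Nat.card_sigma]
  simp only [Nat.card_prod]

theorem card_eq_catalan : ∀ n, Nat.card (CatalanSeq n) = catalan n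
  | 0 => by rw [Nat.card_unique, catalan_zero]
  | n + 1 => by
    rw [card_succ, catalan_succ]
    refine sum_congr rfl fun k _ => ?_
    rw [card_eq_catalan k, card_eq_catalan (n - k)]

def init (f : CatalanSeq (n + 1)) : CatalanSeq n where
  toFun i := min (f i.castSucc) n
  monotone _ _ hab := min_le_min_right n (f.monotone (Fin.castSucc_le_castSucc_iff.2 hab))
  lt_apply i := lt_min (by simpa using f.lt_apply i.castSucc) i.is_lt
  apply_le _ := min_le_right _ _

-- Strictness on both sides leaves room for the next point in `IsRealization.exists_snoc_point`.
def IsRealization (f : CatalanSeq n) (x : Fin n → ℝ) : Prop :=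
  StrictMono x ∧
    ∀ i j : Fin n, (f i ≤ j → x i + 1 < x j) ∧ ((j : ℕ) < f i → x j < x i + 1)

theorem IsRealization.exists_snoc_point {f : CatalanSeq (n + 1)} {x : Fin n → ℝ}
    (hx : f.init.IsRealization x) :
    ∃ v, (∀ i, x i < v) ∧ (∀ i, f i.castSucc ≤ n → x i + 1 < v) ∧
      (∀ i, n < f i.castSucc → v < x i + 1) := by
  have H : ∀ a ∈ Set.range x ∪ (x · + 1) '' {i | f i.castSucc ≤ n},
      ∀ b ∈ (x · + 1) '' {i | n < f i.castSucc}, a < b := by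
    rintro _ (⟨i, rfl⟩ | ⟨i, hi, rfl⟩) _ ⟨k, hk, rfl⟩
    · exact (hx.2 k i).2 (lt_min (i.is_lt.trans hk) i.is_lt)
    · have : i < k := lt_of_not_ge fun hki =>
        (hk.trans_le (f.monotone (Fin.castSucc_le_castSucc_iff.2 hki))).not_ge hi
      simpa using hx.1 this
  obtain ⟨v, hlo, hhi⟩ := Set.Finite.exists_between' (Set.toFinite _) (Set.toFinite _) H
  exact ⟨v, fun i => hlo _ (Or.inl ⟨i, rfl⟩), fun i hi => hlo _ (Or.inr ⟨i, hi, rfl⟩),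
    fun i hi => hhi _ ⟨i, hi, rfl⟩⟩

theorem IsRealization.snoc {f : CatalanSeq (n + 1)} {x : Fin n → ℝ}
    (hx : f.init.IsRealization x) {v : ℝ} (hlo : ∀ i, x i < v)
    (hle : ∀ i, f i.castSucc ≤ n → x i + 1 < v)
    (hgt : ∀ i, n < f i.castSucc → v < x i + 1) : f.IsRealization (Fin.snoc x v) := by
  refine ⟨Fin.strictMono_snoc hx.1 hlo, fun i j => ?_⟩
  induction i using Fin.lastCases with
  | last =>
    have := f.apply_last
    refine ⟨fun h => absurd h (by omega), fun _ => ?_⟩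
    induction j using Fin.lastCases with
    | last => simp
    | cast j => simpa using (hlo j).trans (lt_add_one v)
  | cast i =>
    induction j using Fin.lastCases with
    | last => simpa using ⟨hle i, hgt i⟩
    | cast j =>
      have hj := j.is_lt
      have hxij := hx.2 i j
      simp only [init, lt_min_iff] at hxij
      simp only [Fin.snoc_castSucc, Fin.val_castSucc]
      exact ⟨fun h => hxij.1 (min_le_of_left_le h), fun h => hxij.2 ⟨h, hj⟩⟩

theorem exists_isRealization : ∀ {n} (f : CatalanSeq n), ∃ x, f.IsRealization x
  | 0, _ => ⟨Fin.elim0, fun i => i.elim0, fun i => i.elim0⟩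
  | _ + 1, f => by
    obtain ⟨x, hx⟩ := exists_isRealization f.init
    obtain ⟨v, hlo, hle, hgt⟩ := hx.exists_snoc_point
    exact ⟨_, hx.snoc hlo hle hgt⟩

end CatalanSeq

section threshold

variable {n : ℕ}

open Classical in
noncomputable def threshold (r : Fin n → Fin n → Prop) (i : Fin n) : ℕ :=
  (univ.filter fun j => ¬r i j).card

theorem threshold_le (r : Fin n → Fin n → Prop) (i : Fin n) : threshold r i ≤ n :=
  (card_le_univ _).trans_eq (Fintype.card_fin n)

theorem threshold_comp_perm {r r' : Fin n → Fin n → Prop} (σ : Equiv.Perm (Fin n))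
    (h : ∀ i j, r i j ↔ r' (σ i) (σ j)) : threshold r' ∘ σ = threshold r :=
  funext fun i => by
    simp only [Function.comp_apply, threshold]
    exact (card_equiv σ fun j => by simp [h]).symm

namespace IsUnitIntervalRel

variable {r : Fin n → Fin n → Prop}

theorem threshold_le_iff (hr : IsUnitIntervalRel n r) (i j : Fin n) :
    threshold r i ≤ j ↔ r i j := by
  obtain ⟨x, hx, hrx⟩ := hr
  classical
  have hlow : IsLowerSet (↑(univ.filter fun j => ¬r i j) : Set (Fin n)) := fun a b hba ha => by
    simp only [coe_filter, mem_univ, true_and, Set.mem_ofPred_eq, hrx, not_lt] at ha ⊢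
    exact (hx.monotone hba).trans ha
  rw [threshold, ← not_lt, ← Fin.mem_iff_lt_card_of_isLowerSet hlow]
  simp

theorem monotone_threshold (hr : IsUnitIntervalRel n r) : Monotone (threshold r) := by
  intro i i' hii'
  obtain ⟨x, hx, hrx⟩ := hr
  refine card_le_card fun j => ?_
  simp only [mem_filter, mem_univ, true_and, hrx, not_lt]
  exact fun hj => hj.trans (by linarith [hx.monotone hii'])

theorem lt_threshold (hr : IsUnitIntervalRel n r) (i : Fin n) : (i : ℕ) < threshold r i :=
  lt_of_not_ge fun h => by
    have hii := (hr.threshold_le_iff i i).1 h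
    obtain ⟨x, -, hrx⟩ := hr
    linarith [(hrx i i).1 hii]

noncomputable def toCatalanSeq (hr : IsUnitIntervalRel n r) : CatalanSeq n :=
  ⟨threshold r, hr.monotone_threshold, hr.lt_threshold, threshold_le r⟩

end IsUnitIntervalRel

theorem IsoRel.threshold_eq {r r' : {r : Fin n → Fin n → Prop // IsUnitIntervalRel n r}}
    (h : IsoRel n r r') : threshold r.1 = threshold r'.1 :=
  let ⟨σ, hσ⟩ := h
  r.2.monotone_threshold.eq_of_comp_perm r'.2.monotone_threshold σ (threshold_comp_perm σ hσ)

noncomputable def isoClassToCatalanSeq (n : ℕ) : Quot (IsoRel n) → CatalanSeq n :=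
  Quot.lift (fun r => r.2.toCatalanSeq) fun _ _ h => CatalanSeq.ext h.threshold_eq

theorem isoClassToCatalanSeq_injective : Function.Injective (isoClassToCatalanSeq n) := by
  rintro ⟨r⟩ ⟨r'⟩ h
  have h : threshold r.1 = threshold r'.1 := congrArg CatalanSeq.toFun h
  refine congrArg _ (Subtype.ext (funext₂ fun i j => propext ?_))
  rw [← r.2.threshold_le_iff, ← r'.2.threshold_le_iff, h]

theorem threshold_rel_of_le {f : Fin n → ℕ} (hf : ∀ i, f i ≤ n) :
    threshold (fun i (j : Fin n) => f i ≤ j) = f := by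
  funext i
  simp only [threshold, not_le]
  rw [Fin.card_filter_val_lt, min_eq_right (hf i)]

theorem isoClassToCatalanSeq_surjective : Function.Surjective (isoClassToCatalanSeq n) := by
  intro f
  obtain ⟨x, hx, hxf⟩ := f.exists_isRealization
  have hr : IsUnitIntervalRel n fun i j => f i ≤ j :=
    ⟨x, hx, fun i j => ⟨(hxf i j).1, fun h => not_lt.1 fun hj => ((hxf i j).2 hj).asymm h⟩⟩
  exact ⟨Quot.mk _ ⟨_, hr⟩, CatalanSeq.ext (threshold_rel_of_le f.apply_le)⟩

end threshold

/-- **The number of unit interval posets with `n` elements, counted up to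
isomorphism, is the `n`-th Catalan number** `Cat_n = (1/(2n+1)) * C(2n+1, n)`. -/
theorem card_unitIntervalPosets_eq_catalan (n : ℕ) :
    Nat.card (Quot (IsoRel n)) = catalan n ∧
      (2 * n + 1) * catalan n = (2 * n + 1).choose n := by
  refine ⟨?_, two_mul_add_one_mul_catalan n⟩
  rw [Nat.card_eq_of_bijective _
    ⟨isoClassToCatalanSeq_injective, isoClassToCatalanSeq_surjective⟩]
  exact CatalanSeq.card_eq_catalan n
end

section
/- Let T be a finite plane tree with maximal arity m, and for each non-root node u with root-to-u path u_1, ..., u_{d(u)} (where d(u) is the depth of u and c(v) ∈ {1,...,m} is the position of v among its siblings counted from right to left), define x_u = d(u) + Σ_{i=1}^{d(u)} c(u_i) (m+2)^{-i}. Then the map u ↦ x_u is injective on non-root nodes of T. -/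
inductive PlaneTree where
  | node : List PlaneTree → PlaneTree

namespace PlaneTree

def childrenOf : PlaneTree → List PlaneTree
  | .node cs => cs

def numNodes : PlaneTree → ℕ
  | .node cs => 1 + (cs.attach.map (fun c => numNodes c.1)).sum
decreasing_by have := List.sizeOf_lt_of_mem c.2; simp only [PlaneTree.node.sizeOf_spec]; omega

/-- maximal number of children of a node of the tree -/
def maxArity : PlaneTree → ℕ
  | .node cs => max cs.length ((cs.attach.map (fun c => maxArity c.1)).foldr max 0)
decreasing_by have := List.sizeOf_lt_of_mem c.2; simp only [PlaneTree.node.sizeOf_spec]; omega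

/-- the subtree rooted at the node reached by following the path `p` of
(0-based, left-to-right) child indices from the root, if it exists. -/
def subtreeAt : PlaneTree → List ℕ → Option PlaneTree
  | t, [] => some t
  | t, i :: p =>
    match (childrenOf t)[i]? with
    | some c => subtreeAt c p
    | none => none

/-- `p` is a valid path to a node of `t` (the root is `[]`); the depth of the
corresponding node is `p.length`. -/
def IsNode (t : PlaneTree) (p : List ℕ) : Prop := (t.subtreeAt p).isSome

/-- number of children of the node at path `p` (0 if the path is invalid). -/
def arityAt (t : PlaneTree) (p : List ℕ) : ℕ :=
  ((t.subtreeAt p).map (fun s => s.childrenOf.length)).getD 0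

/-- `c(u_{i+1})`: the sibling index, counted from right to left starting at 1,
of the node at depth `i+1` on the path `p`. -/
def cAt (t : PlaneTree) (p : List ℕ) (i : ℕ) : ℕ :=
  arityAt t (p.take i) - p.getD i 0

/-- `x_u = d(u) + Σ_{i=1}^{d(u)} c(u_i) (m+2)^{-i}` for the node `u` at path `p`,
where `m` is the maximal arity of `t`. -/
noncomputable def xVal (t : PlaneTree) (p : List ℕ) : ℝ :=
  (p.length : ℝ) + ∑ i ∈ Finset.range p.length,
    (cAt t p i : ℝ) * ((maxArity t : ℝ) + 2) ^ (-(i + 1 : ℤ))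

end PlaneTree

open PlaneTree

/-!
The integer part of `x_u` is the depth `d(u)`, and its fractional part is the base-`(m + 2)`
expansion `0.c(u₁)c(u₂)…c(u_d)`, whose digits are at most `m` (so no carries occur). Hence `x_u`
determines the depth and all sibling indices along the root-to-`u` path; since each child index
is recovered from its parent's arity and `c`, these determine `u`.
-/

theorem eq_and_eq_of_natCast_add_eq {m n : ℕ} {x y : ℝ} (hx : x ∈ Set.Ico 0 1)
    (hy : y ∈ Set.Ico 0 1) (h : m + x = n + y) : m = n ∧ x = y := by
  have hfloor : (m : ℤ) = n := by
    simpa [Int.floor_eq_zero_iff.2 hx, Int.floor_eq_zero_iff.2 hy] using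
      congrArg Int.floor h
  have hmn : m = n := by exact_mod_cast hfloor
  subst hmn
  exact ⟨rfl, by linarith⟩

noncomputable def fracDigits (b : ℝ) (c : ℕ → ℕ) (n : ℕ) : ℝ :=
  ∑ i ∈ Finset.range n, (c i : ℝ) * b ^ (-(i + 1 : ℤ))

theorem fracDigits_succ {b : ℝ} (hb : b ≠ 0) (c : ℕ → ℕ) (n : ℕ) :
    fracDigits b c (n + 1) = (c 0 + fracDigits b (fun i => c (i + 1)) n) / b := by
  rw [fracDigits, fracDigits, Finset.sum_range_succ', add_comm, add_div, Finset.sum_div]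
  congr 1
  · simp [div_eq_mul_inv]
  · refine Finset.sum_congr rfl fun i _ => ?_
    rw [mul_div_assoc, div_eq_mul_inv, ← zpow_sub_one₀ hb]
    congr 2

theorem fracDigits_mem_Ico {b : ℝ} {c : ℕ → ℕ} {n : ℕ} (hc : ∀ i < n, (c i : ℝ) + 1 ≤ b) :
    fracDigits b c n ∈ Set.Ico 0 1 := by
  induction n generalizing c with
  | zero => simp [fracDigits]
  | succ n ih =>
    have hb : 0 < b := by linarith [hc 0 n.succ_pos, (c 0).cast_nonneg (α := ℝ)]
    obtain ⟨h0, h1⟩ := ih (c := fun i => c (i + 1)) fun i hi => hc (i + 1) (by omega)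
    rw [fracDigits_succ hb.ne', Set.mem_Ico, div_lt_one hb]
    exact ⟨by positivity, by linarith [hc 0 n.succ_pos]⟩

theorem eq_of_fracDigits_eq {b : ℝ} {c d : ℕ → ℕ} {n : ℕ} (hc : ∀ i < n, (c i : ℝ) + 1 ≤ b)
    (hd : ∀ i < n, (d i : ℝ) + 1 ≤ b) (h : fracDigits b c n = fracDigits b d n) :
    ∀ i < n, c i = d i := by
  induction n generalizing c d with
  | zero => simp
  | succ n ih =>
    have hb : b ≠ 0 := by linarith [hc 0 n.succ_pos, (c 0).cast_nonneg (α := ℝ)]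
    have hc' : ∀ i < n, (c (i + 1) : ℝ) + 1 ≤ b := fun i hi => hc (i + 1) (by omega)
    have hd' : ∀ i < n, (d (i + 1) : ℝ) + 1 ≤ b := fun i hi => hd (i + 1) (by omega)
    rw [fracDigits_succ hb, fracDigits_succ hb, div_left_inj' hb] at h
    obtain ⟨h0, htail⟩ :=
      eq_and_eq_of_natCast_add_eq (fracDigits_mem_Ico hc') (fracDigits_mem_Ico hd') h
    rintro (_ | i) hi
    · exact h0
    · exact ih hc' hd' htail i (by omega)

namespace PlaneTree

theorem subtreeAt_append (t : PlaneTree) (p q : List ℕ) :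
    t.subtreeAt (p ++ q) = (t.subtreeAt p).bind (·.subtreeAt q) := by
  induction p generalizing t with
  | nil => simp [subtreeAt]
  | cons i p ih =>
    simp only [List.cons_append, subtreeAt]
    cases (childrenOf t)[i]? <;> simp [ih]

theorem IsNode.of_append {t : PlaneTree} {p q : List ℕ} (h : IsNode t (p ++ q)) :
    IsNode t p := by
  unfold IsNode at *
  rw [subtreeAt_append] at h
  cases hp : t.subtreeAt p <;> simp_all

theorem IsNode.take {t : PlaneTree} {p : List ℕ} (h : IsNode t p) (i : ℕ) :
    IsNode t (p.take i) :=
  IsNode.of_append (q := p.drop i) (by rwa [List.take_append_drop])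

theorem lt_arityAt_of_isNode_append_singleton {t : PlaneTree} {p : List ℕ} {j : ℕ}
    (h : IsNode t (p ++ [j])) : j < arityAt t p := by
  unfold IsNode at h
  rw [subtreeAt_append] at h
  cases hp : t.subtreeAt p with
  | none => simp [hp] at h
  | some s =>
    simp only [hp, Option.bind_some, subtreeAt] at h
    rcases s with ⟨cs⟩
    simp only [childrenOf] at h
    simp only [arityAt, childrenOf, hp, Option.map_some, Option.getD_some]
    by_contra! hj
    simp [List.getElem?_eq_none hj] at h

theorem IsNode.getElem_lt_arityAt_take {t : PlaneTree} {p : List ℕ} (h : IsNode t p)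
    {i : ℕ} (hi : i < p.length) : p[i] < arityAt t (p.take i) :=
  lt_arityAt_of_isNode_append_singleton (List.take_succ_eq_append_getElem hi ▸ h.take (i + 1))

theorem maxArity_le_of_mem_childrenOf {t c : PlaneTree} (h : c ∈ childrenOf t) :
    maxArity c ≤ maxArity t := by
  rcases t with ⟨cs⟩
  rw [maxArity]
  refine le_max_of_le_right ?_
  have hmem : maxArity c ∈ cs.attach.map (fun c => maxArity c.1) :=
    List.mem_map.2 ⟨⟨c, h⟩, List.mem_attach _ _, rfl⟩
  generalize cs.attach.map (fun c => maxArity c.1) = l at hmem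
  induction l with
  | nil => simp at hmem
  | cons a l ih =>
    rcases List.mem_cons.1 hmem with rfl | hl
    · exact le_max_left _ _
    · exact (ih hl).trans (le_max_right _ _)

theorem maxArity_subtreeAt_le {t s : PlaneTree} {p : List ℕ} (h : t.subtreeAt p = some s) :
    maxArity s ≤ maxArity t := by
  induction p generalizing t with
  | nil => simp_all [subtreeAt]
  | cons i p ih =>
    rw [subtreeAt] at h
    cases hc : (childrenOf t)[i]? with
    | none => simp [hc] at h
    | some c =>
      rw [hc] at h
      exact (ih h).trans (maxArity_le_of_mem_childrenOf (List.mem_of_getElem? hc))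

theorem arityAt_le_maxArity (t : PlaneTree) (p : List ℕ) : arityAt t p ≤ maxArity t := by
  cases h : t.subtreeAt p with
  | none => simp [arityAt, h]
  | some s =>
    rcases s with ⟨cs⟩
    simp only [arityAt, h, Option.map_some, Option.getD_some, childrenOf]
    have hs := maxArity_subtreeAt_le h
    rw [maxArity] at hs
    exact (le_max_left _ _).trans hs

theorem cAt_le_maxArity (t : PlaneTree) (p : List ℕ) (i : ℕ) : cAt t p i ≤ maxArity t :=
  (Nat.sub_le _ _).trans (arityAt_le_maxArity t _)

theorem eq_of_cAt_eq {t : PlaneTree} {p q : List ℕ} (hp : IsNode t p) (hq : IsNode t q)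
    (hlen : p.length = q.length) (hc : ∀ i < p.length, cAt t p i = cAt t q i) : p = q := by
  refine List.ext_getElem hlen fun i hip hiq => ?_
  induction i using Nat.strong_induction_on with
  | _ i ih =>
    have htake : p.take i = q.take i :=
      List.ext_getElem (by simp [hlen]) fun j hjp _ => by
        have hj : j < i := by simp at hjp; omega
        simpa only [List.getElem_take] using ih j hj (by omega) (by omega)
    have hpi := hp.getElem_lt_arityAt_take hip
    have hqi := hq.getElem_lt_arityAt_take hiq
    have hci := hc i hip
    simp only [cAt, List.getD_eq_getElem _ _ hip, List.getD_eq_getElem _ _ hiq, htake] at hci hpi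
    omega

theorem xVal_eq_length_add_fracDigits (t : PlaneTree) (p : List ℕ) :
    xVal t p = p.length + fracDigits (maxArity t + 2) (cAt t p) p.length :=
  rfl

end PlaneTree

theorem xVal_injective_general (t : PlaneTree) (p q : List ℕ)
    (hp : IsNode t p) (hq : IsNode t q)
    (h : xVal t p = xVal t q) : p = q := by
  have hdigit : ∀ (r : List ℕ) i, (cAt t r i : ℝ) + 1 ≤ (maxArity t : ℝ) + 2 := fun r i => by
    have : (cAt t r i : ℝ) ≤ maxArity t := by exact_mod_cast cAt_le_maxArity t r i
    linarith
  rw [xVal_eq_length_add_fracDigits, xVal_eq_length_add_fracDigits] at h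
  obtain ⟨hlen, hfrac⟩ := eq_and_eq_of_natCast_add_eq
    (fracDigits_mem_Ico fun i _ => hdigit p i) (fracDigits_mem_Ico fun i _ => hdigit q i) h
  rw [← hlen] at hfrac
  exact eq_of_cAt_eq hp hq hlen
    (eq_of_fracDigits_eq (fun i _ => hdigit p i) (fun i _ => hdigit q i) hfrac)

/-- The map `u ↦ x_u` is injective on non-root nodes of a plane tree. -/
theorem xVal_injective (t : PlaneTree) (p q : List ℕ)
    (hp : IsNode t p) (hq : IsNode t q) (hp0 : p ≠ []) (hq0 : q ≠ [])
    (h : xVal t p = xVal t q) : p = q :=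
  xVal_injective_general t p q hp hq h
end

section
/- Given a unit interval poset P = ([n], ⪯_S) with starting set S chosen so that S ∩ (S+1) = ∅, the word w of length 2n defined by listing S ∪ (S+1) in increasing order and recording a north step for elements of S and an east step for elements of S+1 is a Dyck path: every prefix contains at least as many north steps as east steps, and w has exactly n north steps and n east steps. -/
/-!
The letters of `w` are read off the sorted list `L` of `S ∪ (S+1)`, so the totals follow from
`L` being a permutation of `S ++ (S+1)`. For a prefix, an east step `x i + 1` is preceded in `L`
by the north step `x i`, so `r ↦ r - 1` injects the east steps of a prefix into its north steps.
-/

theorem List.Pairwise.mem_take_of_lt {α : Type*} [Preorder α] {l : List α}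
    (hl : l.Pairwise (· < ·)) (k : ℕ) {a b : α} (ha : a ∈ l) (hb : b ∈ l.take k) (hab : a < b) :
    a ∈ l.take k := by
  rw [← List.take_append_drop k l, List.pairwise_append] at hl
  rw [← List.take_append_drop k l, List.mem_append] at ha
  exact ha.resolve_right fun ha' => (hl.2.2 b hb a ha').not_gt hab

theorem List.Nodup.count_map_le_count_map {α β : Type*} [BEq β] [LawfulBEq β] {l : List α}
    (hl : l.Nodup) (g : α → β) {u v : β} {f : α → α} (hf : f.Injective)
    (hmaps : ∀ a ∈ l, g a = u → f a ∈ l ∧ g (f a) = v) :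
    (l.map g).count u ≤ (l.map g).count v := by
  rw [List.count_eq_countP, List.count_eq_countP, List.countP_map, List.countP_map,
    List.countP_eq_length_filter, List.countP_eq_length_filter, ← List.length_map (f := f)]
  refine ((hl.filter _).map hf).length_le_of_subset fun b hb => ?_
  obtain ⟨a, ha, rfl⟩ := List.mem_map.mp hb
  simp only [List.mem_filter, Function.comp_apply, beq_iff_eq] at ha ⊢
  exact hmaps a ha.1 ha.2

theorem List.eq_map_of_getD_iff {α : Type*} {L : List α} {d : α} {P : α → Prop} [DecidablePred P]
    {w : List Bool} (hlen : w.length = L.length)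
    (hw : ∀ k < L.length, (w.getD k false = true ↔ P (L.getD k d))) :
    w = L.map fun a => decide (P a) := by
  refine List.ext_getElem (by simp [hlen]) fun k hk hk' => ?_
  have h := hw k (hlen ▸ hk)
  rw [List.getD_eq_getElem _ _ hk, List.getD_eq_getElem _ _ (hlen ▸ hk)] at h
  rw [List.getElem_map, Bool.eq_iff_iff, h, decide_eq_true_iff]

namespace UnitIntervalPoset

variable {n : ℕ} {x : Fin n → ℝ} {L : List ℝ}

noncomputable def isNorth (x : Fin n → ℝ) (r : ℝ) : Bool := decide (∃ i, x i = r)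

theorem isNorth_add_one_eq_false (hdisj : ∀ i j : Fin n, x i + 1 ≠ x j) (i : Fin n) :
    isNorth x (x i + 1) = false := by
  simpa [isNorth] using fun j => (hdisj i j).symm

theorem map_isNorth_perm_replicate (hdisj : ∀ i j : Fin n, x i + 1 ≠ x j)
    (hperm : L.Perm (List.ofFn x ++ List.ofFn (fun i => x i + 1))) :
    (L.map (isNorth x)).Perm (List.replicate n true ++ List.replicate n false) := by
  refine (hperm.map _).trans ?_
  have hBase : isNorth x ∘ x = fun _ => true := funext fun i => decide_eq_true ⟨i, rfl⟩
  have hShift : (isNorth x ∘ fun i => x i + 1) = fun _ => false :=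
    funext (isNorth_add_one_eq_false hdisj)
  rw [List.map_append, List.map_ofFn, List.map_ofFn, hBase, hShift, List.ofFn_const, List.ofFn_const]

theorem count_false_le_count_true_map_take (hsort : L.Pairwise (· < ·))
    (hperm : L.Perm (List.ofFn x ++ List.ofFn (fun i => x i + 1))) (k : ℕ) :
    ((L.take k).map (isNorth x)).count false ≤ ((L.take k).map (isNorth x)).count true := by
  refine (hsort.nodup.sublist (L.take_sublist k)).count_map_le_count_map _
    (sub_left_injective (b := 1)) fun r hr hr_east => ?_
  have hmem : ∀ r, r ∈ L ↔ (∃ i, x i = r) ∨ ∃ i, x i + 1 = r := by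
    simp [hperm.mem_iff, List.mem_ofFn]
  obtain ⟨i, rfl⟩ := ((hmem r).mp (List.mem_of_mem_take hr)).resolve_left
    (by simpa [isNorth] using hr_east)
  rw [add_sub_cancel_right]
  exact ⟨hsort.mem_take_of_lt k ((hmem _).mpr (.inl ⟨i, rfl⟩)) hr (lt_add_one _),
    decide_eq_true ⟨i, rfl⟩⟩

end UnitIntervalPoset

theorem phi_word_isDyck_general (n : ℕ) (x : Fin n → ℝ)
    (hdisj : ∀ i j : Fin n, x i + 1 ≠ x j)
    (L : List ℝ) (hsort : L.Pairwise (· < ·))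
    (hperm : L.Perm (List.ofFn x ++ List.ofFn (fun i => x i + 1)))
    (w : List Bool) (hlen : w.length = L.length)
    (hw : ∀ k < L.length, (w.getD k false = true ↔ ∃ i : Fin n, x i = L.getD k 0)) :
    (∀ p : List Bool, p <+: w → p.count false ≤ p.count true) ∧
      w.count true = n ∧ w.count false = n := by
  obtain rfl : w = L.map (UnitIntervalPoset.isNorth x) := List.eq_map_of_getD_iff hlen hw
  have hcount := UnitIntervalPoset.map_isNorth_perm_replicate hdisj hperm
  refine ⟨fun p hp => ?_, ?_, ?_⟩
  · rw [List.prefix_iff_eq_take, ← List.map_take] at hp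
    rw [hp]
    exact UnitIntervalPoset.count_false_le_count_true_map_take hsort hperm _
  all_goals simp [hcount.count_eq, List.count_replicate]

/-- **The word `φ(P)` is a Dyck path.** Given a starting set
`S = {x_1 < ⋯ < x_n}` with `S ∩ (S+1) = ∅`, list `S ∪ (S+1)` in increasing
order as `L`, and let `w` record `true` (north) for elements of `S` and
`false` (east) for elements of `S+1`. Then every prefix of `w` has at least as
many norths as easts, and `w` has exactly `n` norths and `n` easts. -/
theorem phi_word_isDyck (n : ℕ) (x : Fin n → ℝ) (hx : StrictMono x)
    (hdisj : ∀ i j : Fin n, x i + 1 ≠ x j)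
    (L : List ℝ) (hsort : L.Pairwise (· < ·))
    (hperm : L.Perm (List.ofFn x ++ List.ofFn (fun i => x i + 1)))
    (w : List Bool) (hlen : w.length = L.length)
    (hw : ∀ k < L.length, (w.getD k false = true ↔ ∃ i : Fin n, x i = L.getD k 0)) :
    (∀ p : List Bool, p <+: w → p.count false ≤ p.count true) ∧
      w.count true = n ∧ w.count false = n :=
  phi_word_isDyck_general n x hdisj L hsort hperm w hlen hw
end

section
/- The Dyck path φ(P) produced from a unit interval poset P = ([n], ⪯_S) by sorting S ∪ (S+1) and recording N for elements of S and E for elements of S+1 depends only on the isomorphism class of the poset ([n], ⪯_S), not on the choice of the starting set S. -/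
/-!
In the sorted list `S ∪ (S + 1)` the element `x j + 1` is preceded by the `j` east steps
`x i + 1` with `i < j` and by the north steps `x i < x j + 1`. Since `x i ≠ x j + 1`, the
latter are the `i` with `¬ j ⪯_S i`, so their number transforms along a poset isomorphism;
being monotone in `j`, it is then unchanged, because a monotone rearrangement of a tuple is
unique. Hence the positions of the east steps depend only on the poset.
-/

open Finset

namespace List

theorem countP_ofFn {α : Type*} {n : ℕ} (f : Fin n → α) (p : α → Bool) :
    (ofFn f).countP p = #{i | p (f i)} := by
  rw [ofFn_eq_map, countP_map, Fin.univ_def, card, filter_val, Multiset.filter_coe,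
    Multiset.coe_card, countP_eq_length_filter]
  simp only [Bool.decide_eq_true]
  rfl

variable {α : Type*} [Preorder α] [DecidableLT α]

theorem Pairwise.countP_lt_getElem {L : List α} (hL : L.Pairwise (· < ·)) {k : ℕ}
    (hk : k < L.length) : L.countP (· < L[k]) = k := by
  induction L generalizing k with
  | nil => simp at hk
  | cons a t ih =>
    rw [pairwise_cons] at hL
    cases k with
    | zero =>
      have hnone : t.countP (· < a) = 0 :=
        countP_eq_zero.2 fun b hb => by simpa using (hL.1 b hb).asymm
      simp [hnone]
    | succ k =>
      have hk' : k < t.length := by simpa using hk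
      simp [ih hL.2 hk', hL.1 _ (getElem_mem hk')]

theorem Pairwise.getElem_eq_iff_eq_countP {L : List α} (hL : L.Pairwise (· < ·)) {v : α}
    (hv : v ∈ L) {k : ℕ} (hk : k < L.length) : L[k] = v ↔ k = L.countP (· < v) := by
  obtain ⟨m, hm, rfl⟩ := getElem_of_mem hv
  rw [hL.countP_lt_getElem hm]
  exact ⟨fun h => Fin.mk.inj_iff.1 (hL.sortedLT.strictMono_get.injective h), by rintro rfl; rfl⟩

theorem exists_eq_iff_forall_ne_of_mem_append {β : Type*} {n : ℕ} {f g : Fin n → β}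
    (hfg : ∀ i j, g j ≠ f i) {y : β} (hy : y ∈ ofFn f ++ ofFn g) :
    (∃ i, f i = y) ↔ ∀ j, g j ≠ y := by
  constructor
  · rintro ⟨i, rfl⟩ j
    exact hfg i j
  · intro hg
    rcases mem_append.1 hy with hf | hg'
    · exact mem_ofFn.1 hf
    · obtain ⟨j, rfl⟩ := mem_ofFn.1 hg'
      exact absurd rfl (hg j)

end List

namespace UnitIntervalOrder

variable {n : ℕ} {x x' : Fin n → ℝ}

noncomputable def numNorthBefore (x : Fin n → ℝ) (j : Fin n) : ℕ := #{i | x i < x j + 1}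

theorem numNorthBefore_monotone (hx : Monotone x) : Monotone (numNorthBefore x) := by
  intro a b hab
  apply card_le_card
  intro i
  simp only [mem_filter, mem_univ, true_and]
  exact fun h => h.trans_le (by linarith [hx hab])

theorem numNorthBefore_eq_card_not_lt (hdisj : ∀ i j, x i + 1 ≠ x j) (j : Fin n) :
    numNorthBefore x j = #{i | ¬ x j + 1 < x i} := by
  refine congrArg card (filter_congr fun i _ => ⟨fun h => h.asymm, fun h => ?_⟩)
  exact lt_of_le_of_ne (not_lt.1 h) (hdisj j i).symm

theorem numNorthBefore_eq_of_iso (hx : Monotone x) (hx' : Monotone x')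
    (hdisj : ∀ i j, x i + 1 ≠ x j) (hdisj' : ∀ i j, x' i + 1 ≠ x' j) (σ : Equiv.Perm (Fin n))
    (hiso : ∀ i j, x i + 1 < x j ↔ x' (σ i) + 1 < x' (σ j)) :
    numNorthBefore x = numNorthBefore x' := by
  have hcomp : numNorthBefore x = numNorthBefore x' ∘ σ := funext fun j => by
    rw [Function.comp_apply, numNorthBefore_eq_card_not_lt hdisj,
      numNorthBefore_eq_card_not_lt hdisj']
    exact card_equiv σ fun i => by simp [hiso]
  have hmono : Monotone (numNorthBefore x' ∘ σ) := hcomp ▸ numNorthBefore_monotone hx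
  simpa [← hcomp] using
    Tuple.unique_monotone (τ := 1) hmono (numNorthBefore_monotone hx')

theorem countP_lt_add_one (hx : StrictMono x) (j : Fin n) :
    (List.ofFn x ++ List.ofFn (fun i => x i + 1)).countP (· < x j + 1) =
      numNorthBefore x j + j := by
  rw [List.countP_append, List.countP_ofFn, List.countP_ofFn, numNorthBefore, ← Fin.card_Iio]
  congr 2 <;> ext i <;> simp [hx.lt_iff_lt]

theorem getElem_eq_add_one_iff (hx : StrictMono x) {L : List ℝ} (hsort : L.Pairwise (· < ·))
    (hperm : L.Perm (List.ofFn x ++ List.ofFn (fun i => x i + 1))) {k : ℕ} (hk : k < L.length)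
    (j : Fin n) : L[k] = x j + 1 ↔ k = numNorthBefore x j + j := by
  have hmem : x j + 1 ∈ L := hperm.mem_iff.2 (List.mem_append_right _ (List.mem_ofFn.2 ⟨j, rfl⟩))
  rw [hsort.getElem_eq_iff_eq_countP hmem hk, hperm.countP_eq, countP_lt_add_one hx]

theorem word_eq_ofFn_numNorthBefore (hx : StrictMono x) (hdisj : ∀ i j, x i + 1 ≠ x j)
    {L : List ℝ} (hsort : L.Pairwise (· < ·))
    (hperm : L.Perm (List.ofFn x ++ List.ofFn (fun i => x i + 1)))
    {w : List Bool} (hlen : w.length = L.length)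
    (hw : ∀ k < L.length, (w.getD k false = true ↔ ∃ i, x i = L.getD k 0)) :
    w = List.ofFn fun k : Fin (n + n) => decide (∀ j, (k : ℕ) ≠ numNorthBefore x j + j) := by
  have hL : L.length = n + n := by simpa using hperm.length_eq
  refine List.ext_getElem (by simp [hlen, hL]) fun k hk _ => ?_
  have hkL : k < L.length := hlen ▸ hk
  rw [List.getElem_ofFn, Bool.eq_iff_iff, ← List.getD_eq_getElem w false hk, hw k hkL,
    List.getD_eq_getElem L 0 hkL, decide_eq_true_iff]
  simp only [ne_eq, ← getElem_eq_add_one_iff hx hsort hperm hkL, eq_comm (a := L[k])]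
  exact List.exists_eq_iff_forall_ne_of_mem_append (fun i j => hdisj j i)
    (hperm.mem_iff.1 (List.getElem_mem hkL))

end UnitIntervalOrder

/-- **The Dyck path `φ(P)` only depends on the isomorphism class of the unit
interval poset `P = ([n], ⪯_S)`, not on the choice of the starting set `S`.**
Here `x, x' : Fin n → ℝ` are two increasing starting sets inducing isomorphic
posets (via a permutation `σ`), `L, L'` are the sorted lists of `S ∪ (S+1)` and
`S' ∪ (S'+1)`, and `w, w'` the corresponding N/E words. -/
theorem phi_well_defined (n : ℕ) (x x' : Fin n → ℝ)
    (hx : StrictMono x) (hx' : StrictMono x')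
    (hdisj : ∀ i j : Fin n, x i + 1 ≠ x j)
    (hdisj' : ∀ i j : Fin n, x' i + 1 ≠ x' j)
    (σ : Equiv.Perm (Fin n))
    (hiso : ∀ i j : Fin n, x i + 1 < x j ↔ x' (σ i) + 1 < x' (σ j))
    (L L' : List ℝ)
    (hsort : L.Pairwise (· < ·)) (hsort' : L'.Pairwise (· < ·))
    (hperm : L.Perm (List.ofFn x ++ List.ofFn (fun i => x i + 1)))
    (hperm' : L'.Perm (List.ofFn x' ++ List.ofFn (fun i => x' i + 1)))
    (w w' : List Bool) (hlen : w.length = L.length) (hlen' : w'.length = L'.length)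
    (hw : ∀ k < L.length, (w.getD k false = true ↔ ∃ i : Fin n, x i = L.getD k 0))
    (hw' : ∀ k < L'.length, (w'.getD k false = true ↔ ∃ i : Fin n, x' i = L'.getD k 0)) :
    w = w' := by
  open UnitIntervalOrder in
  rw [word_eq_ofFn_numNorthBefore hx hdisj hsort hperm hlen hw,
    word_eq_ofFn_numNorthBefore hx' hdisj' hsort' hperm' hlen' hw',
    numNorthBefore_eq_of_iso hx.monotone hx'.monotone hdisj hdisj' σ hiso]
end
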